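/- arXiv:1406.3378 — 2 statements merged into one kernel-verified Lean document; each statement's English description precedes it below -/
import Mathlib

section
/- If f : ℕ^k → 𝒫(ℕ) and g : ℕ^{k+2} → 𝒫(ℕ) are probabilistic functions, then the function h : ℕ^{k+1} → 𝒫(ℕ) defined by primitive recursion, h(x⃗,0) = f(x⃗) and h(x⃗,y+1) = g(x⃗,y,h(x⃗,y)) (where the last argument is plugged in via generalized composition, i.e. h(x⃗,y+1)(w) = ∑_{z∈ℕ} g(x⃗,y,z)(w)·h(x⃗,y)(z)), is again a probabilistic function: for all x⃗ and y, h(x⃗,y) is a pseudodistribution on ℕ. -/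
noncomputable section
open scoped Classical

/-- A pseudodistribution on ℕ: pointwise nonnegative, summable, with total mass at most 1. -/
def IsPseudoDist (D : ℕ → ℝ) : Prop :=
  (∀ n, 0 ≤ D n) ∧ Summable D ∧ ∑' n, D n ≤ 1

/-- Primitive recursion of probabilistic functions:
h(x⃗,0) = f(x⃗) and h(x⃗,y+1)(w) = ∑_z g(x⃗,y,z)(w) · h(x⃗,y)(z)
(the last argument of g is plugged in via generalized composition). -/
def primRec {k : ℕ} (f : (Fin k → ℕ) → ℕ → ℝ)
    (g : (Fin k → ℕ) → ℕ → ℕ → ℕ → ℝ) : (Fin k → ℕ) → ℕ → ℕ → ℝ :=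
  fun x y =>
    Nat.rec (f x) (fun y' ih => fun w => ∑' z : ℕ, g x y' z w * ih z) y

/-! Composing a pseudodistribution `D` with a kernel `G` of pseudodistributions gives mass
`∑_w ∑_z G z w · D z`. Its finite partial sums are `∑_z (∑_{w ∈ s} G z w) · D z ≤ ∑_z D z ≤ 1`,
the finite sum over `w` commuting with the sum over `z` since each `z ↦ G z w · D z` is dominated
by `D`; for nonnegative reals, bounded partial sums give summability and the bound on the total. -/

namespace IsPseudoDist

theorem sum_le_one {D : ℕ → ℝ} (hD : IsPseudoDist D) (s : Finset ℕ) : ∑ n ∈ s, D n ≤ 1 :=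
  (hD.2.1.sum_le_tsum s fun n _ => hD.1 n).trans hD.2.2

theorem le_one {D : ℕ → ℝ} (hD : IsPseudoDist D) (n : ℕ) : D n ≤ 1 := by
  simpa using hD.sum_le_one {n}

theorem of_sum_le_one {D : ℕ → ℝ} (h0 : ∀ n, 0 ≤ D n) (hs : ∀ s : Finset ℕ, ∑ n ∈ s, D n ≤ 1) :
    IsPseudoDist D :=
  have hD : Summable D := summable_of_sum_le h0 hs
  ⟨h0, hD, hD.tsum_le_of_sum_le hs⟩

theorem compose {G : ℕ → ℕ → ℝ} {D : ℕ → ℝ} (hG : ∀ z, IsPseudoDist (G z))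
    (hD : IsPseudoDist D) : IsPseudoDist fun w => ∑' z, G z w * D z := by
  have hsummable : ∀ w, Summable fun z => G z w * D z := fun w =>
    hD.2.1.of_nonneg_of_le (fun z => mul_nonneg ((hG z).1 w) (hD.1 z))
      fun z => mul_le_of_le_one_left (hD.1 z) ((hG z).le_one w)
  refine of_sum_le_one (fun w => tsum_nonneg fun z => mul_nonneg ((hG z).1 w) (hD.1 z)) fun s => ?_
  have hpartial : ∀ z, ∑ w ∈ s, G z w * D z ≤ D z := fun z => by
    rw [← Finset.sum_mul]
    exact mul_le_of_le_one_left (hD.1 z) ((hG z).sum_le_one s)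
  calc ∑ w ∈ s, ∑' z, G z w * D z = ∑' z, ∑ w ∈ s, G z w * D z :=
        (Summable.tsum_finsetSum fun w _ => hsummable w).symm
    _ ≤ ∑' z, D z :=
        Summable.tsum_le_tsum hpartial (summable_sum fun w _ => hsummable w) hD.2.1
    _ ≤ 1 := hD.2.2

end IsPseudoDist

/-- the function defined by primitive recursion from probabilistic
functions f and g is again a probabilistic function. -/
theorem primRec_isPseudoDist {k : ℕ} (f : (Fin k → ℕ) → ℕ → ℝ)
    (g : (Fin k → ℕ) → ℕ → ℕ → ℕ → ℝ)
    (hf : ∀ x, IsPseudoDist (f x))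
    (hg : ∀ x y z, IsPseudoDist (g x y z)) :
    ∀ x y, IsPseudoDist (primRec f g x y) := by
  intro x y
  induction y with
  | zero => exact hf x
  | succ y ih => exact IsPseudoDist.compose (hg x y) ih
end
end

section
/- If f : ℕ^{k+1} → 𝒫(ℕ) is a probabilistic function, then its minimization (μf)(x⃗)(y) = f(x⃗,y)(0)·∏_{z<y} (∑_{k>0} f(x⃗,z)(k)) is again a probabilistic function: for every x⃗ ∈ ℕ^k, the values (μf)(x⃗)(y) are nonnegative and ∑_{y∈ℕ} (μf)(x⃗)(y) ≤ 1. -/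
noncomputable section
open scoped Classical

/-- Minimization of a probabilistic function:
(μf)(x⃗)(y) = f(x⃗,y)(0) · ∏_{z<y} (∑_{k>0} f(x⃗,z)(k)). -/
def minimize {k : ℕ} (f : (Fin (k + 1) → ℕ) → ℕ → ℝ) : (Fin k → ℕ) → ℕ → ℝ :=
  fun x y =>
    f (Fin.snoc x y) 0 *
      ∏ z ∈ Finset.range y, ∑' m : {m : ℕ // 0 < m}, f (Fin.snoc x z) (m : ℕ)

/-!
Write `a z = f(x⃗,z)(0)` and `q z = ∑_{k>0} f(x⃗,z)(k)`, so that `a z + q z ≤ 1`, and let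
`P y = ∏_{z<y} q z` (the mass that survives the first `y` rounds). Then
`(μf)(x⃗)(y) = a y * P y ≤ (1 - q y) * P y = P y - P (y+1)`, so the partial sums of `(μf)(x⃗)`
telescope to at most `P 0 - P N ≤ 1`.
-/

open Finset

theorem IsPseudoDist.of_sum_range_le {D : ℕ → ℝ} (h0 : ∀ n, 0 ≤ D n)
    (h : ∀ N, ∑ n ∈ range N, D n ≤ 1) : IsPseudoDist D :=
  ⟨h0, summable_of_sum_range_le h0 h, Real.tsum_le_of_sum_range_le h0 h⟩

theorem IsPseudoDist.apply_zero_add_tsum_pos_le_one {D : ℕ → ℝ} (hD : IsPseudoDist D) :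
    D 0 + ∑' m : {m : ℕ // 0 < m}, D m ≤ 1 :=
  (tsum_zero_pnat_eq_tsum_nat hD.2.1).trans_le hD.2.2

theorem sum_range_mul_prod_range_le {a q : ℕ → ℝ} (hq : ∀ n, 0 ≤ q n)
    (haq : ∀ n, a n + q n ≤ 1) (N : ℕ) :
    ∑ y ∈ range N, a y * ∏ z ∈ range y, q z ≤ 1 - ∏ z ∈ range N, q z := by
  induction N with
  | zero => simp
  | succ N ih =>
    have hP : 0 ≤ ∏ z ∈ range N, q z := prod_nonneg fun z _ => hq z
    rw [sum_range_succ, prod_range_succ]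
    nlinarith [haq N]

theorem isPseudoDist_mul_prod_range {a q : ℕ → ℝ} (ha : ∀ n, 0 ≤ a n) (hq : ∀ n, 0 ≤ q n)
    (haq : ∀ n, a n + q n ≤ 1) : IsPseudoDist fun y => a y * ∏ z ∈ range y, q z :=
  .of_sum_range_le (fun y => mul_nonneg (ha y) (prod_nonneg fun z _ => hq z)) fun N =>
    (sum_range_mul_prod_range_le hq haq N).trans
      (sub_le_self _ (prod_nonneg fun z _ => hq z))

/-- the minimization of a probabilistic function is again a
probabilistic function. -/
theorem minimize_isPseudoDist {k : ℕ} (f : (Fin (k + 1) → ℕ) → ℕ → ℝ)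
    (hf : ∀ v, IsPseudoDist (f v)) :
    ∀ x, IsPseudoDist (minimize f x) := fun _ =>
  isPseudoDist_mul_prod_range (fun _ => (hf _).1 0) (fun _ => tsum_nonneg fun _ => (hf _).1 _)
    fun _ => (hf _).apply_zero_add_tsum_pos_le_one
end
end
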